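/- arXiv:2305.04624 — 4 statements merged into one kernel-verified Lean document; each statement's English description precedes it below -/
import Mathlib

section
/- Let a = (a_n) be a positive sequence and r = (r_n) a bounded, strictly positive weight sequence with lim_{n→∞} a_n r_n = 0. Let s be an s-number assignment, i.e. for all complex Banach spaces and all bounded operators φ it attaches a nonincreasing sequence of nonnegative reals (s_n(φ)) satisfying s_1(φ) = ‖φ‖, s_{m+n−1}(φ+ψ) ≤ s_m(φ) + s_n(ψ), s_n(ζφη) ≤ ‖ζ‖ s_n(φ) ‖η‖, and s_n(φ) = 0 whenever rank(φ) < n. Then: (1) for Banach spaces X, Y, every rank-one operator x′ ⊗ y (x′ ∈ X^*, y ∈ Y, (x′⊗y)(x) = x′(x)y) is of s-type χ_{c_0(r)}; (2) if φ, ψ : X → Y are of s-type χ_{c_0(r)} then so is φ + ψ; (3) if η : X_0 → X and ζ : Y → Y_0 are bounded operators and φ : X → Y is of s-type χ_{c_0(r)}, then ζφη : X_0 → Y_0 is of s-type χ_{c_0(r)}. -/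
open Filter Topology Finset

noncomputable section

universe u

/-- An `s`-number assignment: to every bounded operator `φ` between complex
Banach spaces it attaches a nonincreasing sequence of nonnegative reals
`(sₙ(φ))` (indexed here from `0`, so `sNum φ 0` is the paper's `s₁(φ)`) with
`s₁(φ) = ‖φ‖`, `s_{m+n-1}(φ + ψ) ≤ s_m(φ) + s_n(ψ)`,
`s_n(ζ φ η) ≤ ‖ζ‖ s_n(φ) ‖η‖`, and `s_n(φ) = 0` whenever `rank φ < n`. -/
structure SNumberAssignment : Type (u + 1) where
  sNum : ∀ {X Y : Type u} [NormedAddCommGroup X] [NormedSpace ℂ X] [CompleteSpace X]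
      [NormedAddCommGroup Y] [NormedSpace ℂ Y] [CompleteSpace Y],
      (X →L[ℂ] Y) → ℕ → ℝ
  nonneg : ∀ {X Y : Type u} [NormedAddCommGroup X] [NormedSpace ℂ X] [CompleteSpace X]
      [NormedAddCommGroup Y] [NormedSpace ℂ Y] [CompleteSpace Y]
      (φ : X →L[ℂ] Y) (n : ℕ), 0 ≤ sNum φ n
  antitone : ∀ {X Y : Type u} [NormedAddCommGroup X] [NormedSpace ℂ X] [CompleteSpace X]
      [NormedAddCommGroup Y] [NormedSpace ℂ Y] [CompleteSpace Y]
      (φ : X →L[ℂ] Y), Antitone (sNum φ)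
  first_eq_norm : ∀ {X Y : Type u} [NormedAddCommGroup X] [NormedSpace ℂ X] [CompleteSpace X]
      [NormedAddCommGroup Y] [NormedSpace ℂ Y] [CompleteSpace Y]
      (φ : X →L[ℂ] Y), sNum φ 0 = ‖φ‖
  add_le : ∀ {X Y : Type u} [NormedAddCommGroup X] [NormedSpace ℂ X] [CompleteSpace X]
      [NormedAddCommGroup Y] [NormedSpace ℂ Y] [CompleteSpace Y]
      (φ ψ : X →L[ℂ] Y) (m n : ℕ), sNum (φ + ψ) (m + n) ≤ sNum φ m + sNum ψ n
  comp_le : ∀ {X₀ X Y Y₀ : Type u}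
      [NormedAddCommGroup X₀] [NormedSpace ℂ X₀] [CompleteSpace X₀]
      [NormedAddCommGroup X] [NormedSpace ℂ X] [CompleteSpace X]
      [NormedAddCommGroup Y] [NormedSpace ℂ Y] [CompleteSpace Y]
      [NormedAddCommGroup Y₀] [NormedSpace ℂ Y₀] [CompleteSpace Y₀]
      (ζ : Y →L[ℂ] Y₀) (φ : X →L[ℂ] Y) (η : X₀ →L[ℂ] X) (n : ℕ),
      sNum ((ζ.comp φ).comp η) n ≤ ‖ζ‖ * sNum φ n * ‖η‖
  rank_small : ∀ {X Y : Type u} [NormedAddCommGroup X] [NormedSpace ℂ X] [CompleteSpace X]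
      [NormedAddCommGroup Y] [NormedSpace ℂ Y] [CompleteSpace Y]
      (φ : X →L[ℂ] Y) (n : ℕ),
      Module.rank ℂ (LinearMap.range (φ : X →ₗ[ℂ] Y)) < (n + 1 : ℕ) → sNum φ n = 0

/-- `φ` is of s-type `χ_{c₀(r)}`: `aᵢ (∑_{j=1}^i sⱼ(φ)) rᵢ → 0` as `i → ∞`. -/
def IsSType (S : SNumberAssignment.{u}) (a r : ℕ → ℝ)
    {X Y : Type u} [NormedAddCommGroup X] [NormedSpace ℂ X] [CompleteSpace X]
    [NormedAddCommGroup Y] [NormedSpace ℂ Y] [CompleteSpace Y]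
    (φ : X →L[ℂ] Y) : Prop :=
  Filter.Tendsto (fun i : ℕ => a i * (∑ j ∈ Finset.range (i + 1), S.sNum φ j) * r i)
    Filter.atTop (nhds 0)

lemma sum_half_le_aux (f : ℕ → ℝ) (hf : ∀ n, 0 ≤ f n) (i : ℕ) :
    ∑ j ∈ Finset.range (i + 1), f (j / 2) ≤ 2 * ∑ k ∈ Finset.range (i + 1), f k := by
  have key : ∀ n, ∑ j ∈ Finset.range (2 * n), f (j / 2)
      = 2 * ∑ k ∈ Finset.range n, f k := by
    intro n
    induction n with
    | zero => simp
    | succ n ih =>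
      have h1 : (2 * n + 1) / 2 = n := by omega
      have h2 : (2 * n) / 2 = n := by omega
      rw [Nat.mul_succ, show 2 * n + 2 = (2 * n + 1) + 1 from rfl,
        Finset.sum_range_succ, Finset.sum_range_succ, Finset.sum_range_succ, ih, h1, h2]
      ring
  calc ∑ j ∈ Finset.range (i + 1), f (j / 2)
      ≤ ∑ j ∈ Finset.range (2 * (i + 1)), f (j / 2) :=
        Finset.sum_le_sum_of_subset_of_nonneg
          (Finset.range_subset_range.mpr (by omega)) (fun j _ _ => hf _)
    _ = 2 * ∑ k ∈ Finset.range (i + 1), f k := key _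

lemma squeeze_to_zero {f g : ℕ → ℝ} (h0 : ∀ n, 0 ≤ f n) (hle : ∀ n, f n ≤ g n)
    (hg : Filter.Tendsto g Filter.atTop (nhds 0)) :
    Filter.Tendsto f Filter.atTop (nhds 0) :=
  squeeze_zero h0 hle hg

/-- **Statement 16.** If `aₙ rₙ → 0` then the class of s-type `χ_{c₀(r)}` operators
satisfies the three operator-ideal axioms: it contains all rank-one operators
`x' ⊗ y`, is closed under addition, and is closed under composition with bounded
operators on either side. -/
theorem sType_operator_ideal (S : SNumberAssignment.{u}) (a r : ℕ → ℝ)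
    (ha_pos : ∀ n, 0 < a n) (hr_pos : ∀ n, 0 < r n) (hr_bdd : ∃ C, ∀ n, r n ≤ C)
    (har : Filter.Tendsto (fun n => a n * r n) Filter.atTop (nhds 0)) :
    (∀ (X Y : Type u) [NormedAddCommGroup X] [NormedSpace ℂ X] [CompleteSpace X]
        [NormedAddCommGroup Y] [NormedSpace ℂ Y] [CompleteSpace Y]
        (x' : X →L[ℂ] ℂ) (y : Y), IsSType S a r (x'.smulRight y)) ∧
    (∀ (X Y : Type u) [NormedAddCommGroup X] [NormedSpace ℂ X] [CompleteSpace X]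
        [NormedAddCommGroup Y] [NormedSpace ℂ Y] [CompleteSpace Y]
        (φ ψ : X →L[ℂ] Y), IsSType S a r φ → IsSType S a r ψ → IsSType S a r (φ + ψ)) ∧
    (∀ (X₀ X Y Y₀ : Type u)
        [NormedAddCommGroup X₀] [NormedSpace ℂ X₀] [CompleteSpace X₀]
        [NormedAddCommGroup X] [NormedSpace ℂ X] [CompleteSpace X]
        [NormedAddCommGroup Y] [NormedSpace ℂ Y] [CompleteSpace Y]
        [NormedAddCommGroup Y₀] [NormedSpace ℂ Y₀] [CompleteSpace Y₀]
        (η : X₀ →L[ℂ] X) (φ : X →L[ℂ] Y) (ζ : Y →L[ℂ] Y₀),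
        IsSType S a r φ → IsSType S a r ((ζ.comp φ).comp η)) := by
  refine ⟨?_, ?_, ?_⟩
  · -- rank-one operators
    intro X Y _ _ _ _ _ _ x' y
    set φ := x'.smulRight y with hφ
    have hrank : Module.rank ℂ (LinearMap.range (φ : X →ₗ[ℂ] Y)) < ((1 : ℕ) + 1 : ℕ) := by
      have hle : LinearMap.range (φ : X →ₗ[ℂ] Y) ≤ Submodule.span ℂ {y} := by
        rintro z ⟨x, rfl⟩
        exact Submodule.smul_mem _ _ (Submodule.mem_span_singleton_self y)
      calc Module.rank ℂ (LinearMap.range (φ : X →ₗ[ℂ] Y))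
          ≤ Module.rank ℂ (Submodule.span ℂ ({y} : Set Y)) := Submodule.rank_mono hle
        _ ≤ 1 := by
            simpa using rank_span_le (R := ℂ) ({y} : Set Y)
        _ < ((1 : ℕ) + 1 : ℕ) := by norm_num
    have h1 : S.sNum φ 1 = 0 := S.rank_small φ 1 hrank
    have hzero : ∀ j, 1 ≤ j → S.sNum φ j = 0 := by
      intro j hj
      have := S.antitone φ hj
      have := S.nonneg φ j
      linarith [h1 ▸ S.antitone φ hj]
    have hsum : ∀ i : ℕ, ∑ j ∈ Finset.range (i + 1), S.sNum φ j = ‖φ‖ := by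
      intro i
      rw [Finset.sum_eq_single 0]
      · exact S.first_eq_norm φ
      · intro j _ hj; exact hzero j (Nat.one_le_iff_ne_zero.mpr hj)
      · intro h; exact absurd (Finset.mem_range.mpr (Nat.succ_pos i)) h
    unfold IsSType
    have : Filter.Tendsto (fun i : ℕ => ‖φ‖ * (a i * r i)) Filter.atTop (nhds (‖φ‖ * 0)) :=
      har.const_mul _
    simp only [mul_zero] at this
    refine this.congr (fun i => ?_)
    rw [hsum i]; ring
  · -- addition
    intro X Y _ _ _ _ _ _ φ ψ hφ hψ
    unfold IsSType at *
    have hbound : ∀ i : ℕ,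
        a i * (∑ j ∈ Finset.range (i + 1), S.sNum (φ + ψ) j) * r i
          ≤ 2 * (a i * (∑ j ∈ Finset.range (i + 1), S.sNum φ j) * r i)
            + 2 * (a i * (∑ j ∈ Finset.range (i + 1), S.sNum ψ j) * r i) := by
      intro i
      have hterm : ∀ j, S.sNum (φ + ψ) j ≤ S.sNum φ (j / 2) + S.sNum ψ (j / 2) := by
        intro j
        have h1 : j / 2 + j / 2 ≤ j := by omega
        exact le_trans (S.antitone _ h1) (S.add_le φ ψ (j / 2) (j / 2))
      have hsum1 : ∑ j ∈ Finset.range (i + 1), S.sNum (φ + ψ) j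
          ≤ ∑ j ∈ Finset.range (i + 1), (S.sNum φ (j / 2) + S.sNum ψ (j / 2)) :=
        Finset.sum_le_sum (fun j _ => hterm j)
      have hsum2 : ∑ j ∈ Finset.range (i + 1), (S.sNum φ (j / 2) + S.sNum ψ (j / 2))
          ≤ 2 * (∑ j ∈ Finset.range (i + 1), S.sNum φ j)
            + 2 * (∑ j ∈ Finset.range (i + 1), S.sNum ψ j) := by
        rw [Finset.sum_add_distrib]
        exact add_le_add (sum_half_le_aux _ (S.nonneg φ) i) (sum_half_le_aux _ (S.nonneg ψ) i)
      have har' : 0 < a i * r i := mul_pos (ha_pos i) (hr_pos i)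
      nlinarith [hsum1.trans hsum2]
    have hg : Filter.Tendsto
        (fun i : ℕ => 2 * (a i * (∑ j ∈ Finset.range (i + 1), S.sNum φ j) * r i)
          + 2 * (a i * (∑ j ∈ Finset.range (i + 1), S.sNum ψ j) * r i))
        Filter.atTop (nhds (2 * 0 + 2 * 0)) :=
      ((hφ.const_mul 2).add (hψ.const_mul 2))
    simp only [mul_zero, add_zero] at hg
    refine squeeze_to_zero (fun i => ?_) hbound hg
    have : 0 ≤ ∑ j ∈ Finset.range (i + 1), S.sNum (φ + ψ) j :=
      Finset.sum_nonneg (fun j _ => S.nonneg _ j)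
    exact mul_nonneg (mul_nonneg (ha_pos i).le this) (hr_pos i).le
  · -- composition
    intro X₀ X Y Y₀ _ _ _ _ _ _ _ _ _ _ _ _ η φ ζ hφ
    unfold IsSType at *
    have hbound : ∀ i : ℕ,
        a i * (∑ j ∈ Finset.range (i + 1), S.sNum ((ζ.comp φ).comp η) j) * r i
          ≤ (‖ζ‖ * ‖η‖) * (a i * (∑ j ∈ Finset.range (i + 1), S.sNum φ j) * r i) := by
      intro i
      have hsum : ∑ j ∈ Finset.range (i + 1), S.sNum ((ζ.comp φ).comp η) j
          ≤ (‖ζ‖ * ‖η‖) * ∑ j ∈ Finset.range (i + 1), S.sNum φ j := by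
        rw [Finset.mul_sum]
        refine Finset.sum_le_sum (fun j _ => ?_)
        calc S.sNum ((ζ.comp φ).comp η) j ≤ ‖ζ‖ * S.sNum φ j * ‖η‖ := S.comp_le ζ φ η j
          _ = ‖ζ‖ * ‖η‖ * S.sNum φ j := by ring
      have har' : 0 < a i * r i := mul_pos (ha_pos i) (hr_pos i)
      nlinarith
    have hg : Filter.Tendsto
        (fun i : ℕ => (‖ζ‖ * ‖η‖) * (a i * (∑ j ∈ Finset.range (i + 1), S.sNum φ j) * r i))
        Filter.atTop (nhds ((‖ζ‖ * ‖η‖) * 0)) := hφ.const_mul _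
    simp only [mul_zero] at hg
    refine squeeze_to_zero (fun i => ?_) hbound hg
    have : 0 ≤ ∑ j ∈ Finset.range (i + 1), S.sNum ((ζ.comp φ).comp η) j :=
      Finset.sum_nonneg (fun j _ => S.nonneg _ j)
    exact mul_nonneg (mul_nonneg (ha_pos i).le this) (hr_pos i).le

end
end

section
/- Let a = (a_n) be a positive sequence and r = (r_n) a bounded, strictly positive weight sequence with lim_{n→∞} n·a_n·r_n = 0. Let s be an s-number assignment, i.e. for each pair of complex Banach spaces and each bounded operator φ it attaches a nonincreasing sequence of nonnegative reals (s_n(φ)) satisfying s_1(φ) = ‖φ‖, s_{m+n−1}(φ+ψ) ≤ s_m(φ) + s_n(ψ), s_n(ζφη) ≤ ‖ζ‖ s_n(φ) ‖η‖, and s_n(φ) = 0 whenever rank(φ) < n. Let X, Y be complex Banach spaces and (φ_k) a sequence of bounded operators from X to Y, each of s-type χ_{c_0(r)}, converging in operator norm to φ ∈ B(X,Y). Then φ is of s-type χ_{c_0(r)}; in particular the set of s-type χ_{c_0(r)} operators is a closed subset of B(X,Y). -/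
open Filter Topology Finset

noncomputable section

universe u

/-- **Statement 17.** If `n·aₙ·rₙ → 0` then the class of s-type `χ_{c₀(r)}`
operators is closed under operator-norm limits, and hence is a closed subset
of `B(X, Y)`. -/
theorem sType_closed (S : SNumberAssignment.{u}) (a r : ℕ → ℝ)
    (ha_pos : ∀ n, 0 < a n) (hr_pos : ∀ n, 0 < r n) (hr_bdd : ∃ C, ∀ n, r n ≤ C)
    (har : Filter.Tendsto (fun n : ℕ => ((n : ℝ) + 1) * a n * r n) Filter.atTop (nhds 0))
    (X Y : Type u) [NormedAddCommGroup X] [NormedSpace ℂ X] [CompleteSpace X]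
    [NormedAddCommGroup Y] [NormedSpace ℂ Y] [CompleteSpace Y] :
    (∀ (φs : ℕ → X →L[ℂ] Y) (φ : X →L[ℂ] Y), (∀ k, IsSType S a r (φs k)) →
      Filter.Tendsto (fun k => ‖φs k - φ‖) Filter.atTop (nhds 0) → IsSType S a r φ) ∧
    IsClosed {φ : X →L[ℂ] Y | IsSType S a r φ} := by
  have snum_le : ∀ (φ ψ : X →L[ℂ] Y) (j : ℕ),
      S.sNum φ j ≤ S.sNum ψ j + ‖ψ - φ‖ := by
    intro φ ψ j
    have h := S.add_le ψ (φ - ψ) j 0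
    have h2 : ψ + (φ - ψ) = φ := by abel
    rw [h2, S.first_eq_norm, Nat.add_zero] at h
    rwa [norm_sub_rev ψ φ]
  obtain ⟨M, hM⟩ : ∃ M, ∀ n : ℕ, ((n : ℝ) + 1) * a n * r n ≤ M := by
    obtain ⟨M, hM⟩ := har.bddAbove_range
    exact ⟨M, fun n => hM (Set.mem_range_self n)⟩
  set M' : ℝ := max M 1 with hM'def
  have hM'pos : (0 : ℝ) < M' := lt_of_lt_of_le one_pos (le_max_right _ _)
  have hM' : ∀ n : ℕ, ((n : ℝ) + 1) * a n * r n ≤ M' := fun n =>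
    le_trans (hM n) (le_max_left _ _)
  have key : ∀ (φs : ℕ → X →L[ℂ] Y) (φ : X →L[ℂ] Y), (∀ k, IsSType S a r (φs k)) →
      Filter.Tendsto (fun k => ‖φs k - φ‖) Filter.atTop (nhds 0) → IsSType S a r φ := by
    intro φs φ hk hconv
    rw [IsSType, Metric.tendsto_atTop]
    intro ε hε
    -- choose k
    have hε2 : (0 : ℝ) < ε / (2 * M') := by positivity
    obtain ⟨k, hkclose⟩ : ∃ k, ‖φs k - φ‖ < ε / (2 * M') := by
      rcases (Metric.tendsto_atTop.mp hconv _ hε2) with ⟨K, hK⟩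
      refine ⟨K, ?_⟩
      have := hK K le_rfl
      rwa [Real.dist_eq, sub_zero, abs_of_nonneg (norm_nonneg _)] at this
    obtain ⟨N, hN⟩ := Metric.tendsto_atTop.mp (hk k) (ε / 2) (by positivity)
    refine ⟨N, fun i hi => ?_⟩
    have hgi := hN i hi
    rw [Real.dist_eq, sub_zero] at hgi ⊢
    have hsum_nonneg : (0 : ℝ) ≤ ∑ j ∈ Finset.range (i + 1), S.sNum φ j :=
      Finset.sum_nonneg fun j _ => S.nonneg φ j
    have hf_nonneg : 0 ≤ a i * (∑ j ∈ Finset.range (i + 1), S.sNum φ j) * r i := by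
      have := (ha_pos i).le; have := (hr_pos i).le; positivity
    rw [abs_of_nonneg hf_nonneg]
    have hgi' : a i * (∑ j ∈ Finset.range (i + 1), S.sNum (φs k) j) * r i < ε / 2 :=
      lt_of_le_of_lt (le_abs_self _) hgi
    set c := ‖φs k - φ‖ with hc
    have hc0 : 0 ≤ c := norm_nonneg _
    have hsumle : (∑ j ∈ Finset.range (i + 1), S.sNum φ j)
        ≤ (∑ j ∈ Finset.range (i + 1), S.sNum (φs k) j) + ((i : ℝ) + 1) * c := by
      calc (∑ j ∈ Finset.range (i + 1), S.sNum φ j)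
          ≤ ∑ j ∈ Finset.range (i + 1), (S.sNum (φs k) j + c) :=
            Finset.sum_le_sum fun j _ => snum_le φ (φs k) j
        _ = (∑ j ∈ Finset.range (i + 1), S.sNum (φs k) j) + ((i : ℝ) + 1) * c := by
            rw [Finset.sum_add_distrib, Finset.sum_const, Finset.card_range]
            push_cast; ring
    have hstep : a i * (∑ j ∈ Finset.range (i + 1), S.sNum φ j) * r i
        ≤ a i * (∑ j ∈ Finset.range (i + 1), S.sNum (φs k) j) * r i
          + (((i : ℝ) + 1) * a i * r i) * c := by
      have h1 : a i * (∑ j ∈ Finset.range (i + 1), S.sNum φ j) * r i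
          ≤ a i * ((∑ j ∈ Finset.range (i + 1), S.sNum (φs k) j) + ((i : ℝ) + 1) * c) * r i := by
        have := (ha_pos i).le; have := (hr_pos i).le
        apply mul_le_mul_of_nonneg_right _ (hr_pos i).le
        exact mul_le_mul_of_nonneg_left hsumle (ha_pos i).le
      calc a i * (∑ j ∈ Finset.range (i + 1), S.sNum φ j) * r i ≤ _ := h1
        _ = a i * (∑ j ∈ Finset.range (i + 1), S.sNum (φs k) j) * r i
          + (((i : ℝ) + 1) * a i * r i) * c := by ring
    have htail : (((i : ℝ) + 1) * a i * r i) * c ≤ M' * (ε / (2 * M')) := by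
      apply mul_le_mul (hM' i) hkclose.le hc0 hM'pos.le
    have hM'eq : M' * (ε / (2 * M')) = ε / 2 := by
      field_simp
    calc a i * (∑ j ∈ Finset.range (i + 1), S.sNum φ j) * r i
        ≤ a i * (∑ j ∈ Finset.range (i + 1), S.sNum (φs k) j) * r i
          + (((i : ℝ) + 1) * a i * r i) * c := hstep
      _ < ε / 2 + ε / 2 := by
          apply add_lt_add_of_lt_of_le hgi'
          rw [← hM'eq]; exact htail
      _ = ε := by ring
  refine ⟨key, ?_⟩
  apply IsSeqClosed.isClosed
  intro φs φ hmem hconv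
  exact key φs φ hmem (tendsto_iff_norm_sub_tendsto_zero.mp hconv)

end
end

section
/- Let a = (a_n) be a positive sequence and r = (r_n) a bounded, strictly positive weight sequence with sup_i a_i r_i = 1. Let s be an s-number assignment, i.e. for all bounded operators φ between complex Banach spaces it attaches a nonincreasing sequence of nonnegative reals (s_n(φ)) satisfying s_1(φ) = ‖φ‖, s_{m+n−1}(φ+ψ) ≤ s_m(φ) + s_n(ψ), s_n(ζφη) ≤ ‖ζ‖ s_n(φ) ‖η‖, and s_n(φ) = 0 whenever rank(φ) < n. For an operator φ of s-type χ_{c_0(r)} define Q^{(s)}(φ) = sup_i (a_i ∑_{j=1}^i s_j(φ)) r_i. Then: (1) Q^{(s)}(x′ ⊗ y) = ‖x′‖·‖y‖ for every x′ ∈ X^* and y ∈ Y; (2) Q^{(s)}(φ + ψ) ≤ 2(Q^{(s)}(φ) + Q^{(s)}(ψ)) for s-type operators φ, ψ : X → Y; (3) Q^{(s)}(ζφη) ≤ ‖ζ‖·Q^{(s)}(φ)·‖η‖ for bounded η : X_0 → X, ζ : Y → Y_0 and s-type φ : X → Y; and (4) ‖φ‖ ≤ Q^{(s)}(φ) for every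 s-type operator φ. -/
open Filter Topology Finset

noncomputable section

universe u

/-- The quasi-norm `Q^{(s)}(φ) = sup_i aᵢ (∑_{j=1}^i sⱼ(φ)) rᵢ`. -/
def QNorm (S : SNumberAssignment.{u}) (a r : ℕ → ℝ)
    {X Y : Type u} [NormedAddCommGroup X] [NormedSpace ℂ X] [CompleteSpace X]
    [NormedAddCommGroup Y] [NormedSpace ℂ Y] [CompleteSpace Y]
    (φ : X →L[ℂ] Y) : ℝ :=
  ⨆ i : ℕ, a i * (∑ j ∈ Finset.range (i + 1), S.sNum φ j) * r i

private lemma sum_half_aux (f : ℕ → ℝ) (m : ℕ) :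
    ∑ j ∈ Finset.range (2 * m), f (j / 2) = 2 * ∑ k ∈ Finset.range m, f k := by
  induction m with
  | zero => simp
  | succ m ih =>
    have h2 : 2 * (m + 1) = (2 * m + 1) + 1 := by ring
    rw [h2, Finset.sum_range_succ, Finset.sum_range_succ, ih, Finset.sum_range_succ]
    have e1 : (2 * m) / 2 = m := by omega
    have e2 : (2 * m + 1) / 2 = m := by omega
    rw [e1, e2]; ring

/-- **Statement 18.** If `sup_i aᵢ rᵢ = 1` then the quasi-norm
`Q^{(s)}(φ) = sup_i aᵢ (∑_{j=1}^i sⱼ(φ)) rᵢ` satisfies: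
`Q^{(s)}(x' ⊗ y) = ‖x'‖ ‖y‖`, `Q^{(s)}(φ + ψ) ≤ 2 (Q^{(s)}(φ) + Q^{(s)}(ψ))`,
`Q^{(s)}(ζ φ η) ≤ ‖ζ‖ Q^{(s)}(φ) ‖η‖`, and `‖φ‖ ≤ Q^{(s)}(φ)`. -/
theorem qNorm_is_quasi_norm (S : SNumberAssignment.{u}) (a r : ℕ → ℝ)
    (ha_pos : ∀ n, 0 < a n) (hr_pos : ∀ n, 0 < r n) (hr_bdd : ∃ C, ∀ n, r n ≤ C)
    (har : (⨆ i : ℕ, a i * r i) = 1) :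
    (∀ (X Y : Type u) [NormedAddCommGroup X] [NormedSpace ℂ X] [CompleteSpace X]
        [NormedAddCommGroup Y] [NormedSpace ℂ Y] [CompleteSpace Y]
        (x' : X →L[ℂ] ℂ) (y : Y), QNorm S a r (x'.smulRight y) = ‖x'‖ * ‖y‖) ∧
    (∀ (X Y : Type u) [NormedAddCommGroup X] [NormedSpace ℂ X] [CompleteSpace X]
        [NormedAddCommGroup Y] [NormedSpace ℂ Y] [CompleteSpace Y]
        (φ ψ : X →L[ℂ] Y), IsSType S a r φ → IsSType S a r ψ →
        QNorm S a r (φ + ψ) ≤ 2 * (QNorm S a r φ + QNorm S a r ψ)) ∧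
    (∀ (X₀ X Y Y₀ : Type u)
        [NormedAddCommGroup X₀] [NormedSpace ℂ X₀] [CompleteSpace X₀]
        [NormedAddCommGroup X] [NormedSpace ℂ X] [CompleteSpace X]
        [NormedAddCommGroup Y] [NormedSpace ℂ Y] [CompleteSpace Y]
        [NormedAddCommGroup Y₀] [NormedSpace ℂ Y₀] [CompleteSpace Y₀]
        (η : X₀ →L[ℂ] X) (φ : X →L[ℂ] Y) (ζ : Y →L[ℂ] Y₀), IsSType S a r φ →
        QNorm S a r ((ζ.comp φ).comp η) ≤ ‖ζ‖ * QNorm S a r φ * ‖η‖) ∧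
    (∀ (X Y : Type u) [NormedAddCommGroup X] [NormedSpace ℂ X] [CompleteSpace X]
        [NormedAddCommGroup Y] [NormedSpace ℂ Y] [CompleteSpace Y]
        (φ : X →L[ℂ] Y), IsSType S a r φ → ‖φ‖ ≤ QNorm S a r φ) := by
  -- abbreviation for the terms of the sup
  have hT_le : ∀ (X Y : Type u) [NormedAddCommGroup X] [NormedSpace ℂ X] [CompleteSpace X]
      [NormedAddCommGroup Y] [NormedSpace ℂ Y] [CompleteSpace Y]
      (φ : X →L[ℂ] Y), IsSType S a r φ → ∀ i,
      a i * (∑ j ∈ Finset.range (i + 1), S.sNum φ j) * r i ≤ QNorm S a r φ := by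
    intro X Y _ _ _ _ _ _ φ hφ i
    exact le_ciSup hφ.bddAbove_range i
  have hsum_nonneg : ∀ (X Y : Type u) [NormedAddCommGroup X] [NormedSpace ℂ X] [CompleteSpace X]
      [NormedAddCommGroup Y] [NormedSpace ℂ Y] [CompleteSpace Y]
      (φ : X →L[ℂ] Y) (i : ℕ), 0 ≤ ∑ j ∈ Finset.range (i + 1), S.sNum φ j := by
    intro X Y _ _ _ _ _ _ φ i
    exact Finset.sum_nonneg fun j _ => S.nonneg φ j
  refine ⟨?_, ?_, ?_, ?_⟩
  · -- rank-one operators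
    intro X Y _ _ _ _ _ _ x' y
    set φ := x'.smulRight y with hφdef
    have hrank : ∀ n : ℕ, 1 ≤ n → S.sNum φ n = 0 := by
      intro n hn
      apply S.rank_small
      have hsub : LinearMap.range (φ : X →ₗ[ℂ] Y) ≤ Submodule.span ℂ {y} := by
        rintro z ⟨x, rfl⟩
        exact Submodule.smul_mem _ _ (Submodule.mem_span_singleton_self y)
      calc Module.rank ℂ (LinearMap.range (φ : X →ₗ[ℂ] Y))
          ≤ Module.rank ℂ (Submodule.span ℂ ({y} : Set Y)) := Submodule.rank_mono hsub
        _ ≤ 1 := by simpa using rank_span_le (R := ℂ) ({y} : Set Y)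
        _ < (n + 1 : ℕ) := by exact_mod_cast Nat.lt_add_of_pos_left hn
    have hsum : ∀ i : ℕ, ∑ j ∈ Finset.range (i + 1), S.sNum φ j = ‖φ‖ := by
      intro i
      rw [Finset.sum_range_succ']
      have : ∑ j ∈ Finset.range i, S.sNum φ (j + 1) = 0 :=
        Finset.sum_eq_zero fun j _ => hrank (j + 1) (Nat.le_add_left 1 j)
      rw [this, zero_add, S.first_eq_norm]
    calc QNorm S a r φ
        = ⨆ i, (a i * r i) * ‖φ‖ := by
          unfold QNorm; congr 1; funext i; rw [hsum i]; ring
      _ = (⨆ i, a i * r i) * ‖φ‖ := (Real.iSup_mul_of_nonneg (norm_nonneg φ) _).symm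
      _ = ‖φ‖ := by rw [har, one_mul]
      _ = ‖x'‖ * ‖y‖ := ContinuousLinearMap.norm_smulRight_apply x' y
  · -- quasi triangle inequality
    intro X Y _ _ _ _ _ _ φ ψ hφ hψ
    apply ciSup_le
    intro i
    have key : ∑ j ∈ Finset.range (i + 1), S.sNum (φ + ψ) j ≤
        2 * (∑ j ∈ Finset.range (i + 1), S.sNum φ j) +
        2 * (∑ j ∈ Finset.range (i + 1), S.sNum ψ j) := by
      calc ∑ j ∈ Finset.range (i + 1), S.sNum (φ + ψ) j
          ≤ ∑ j ∈ Finset.range (i + 1), (S.sNum φ (j / 2) + S.sNum ψ (j / 2)) := by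
            apply Finset.sum_le_sum
            intro j _
            calc S.sNum (φ + ψ) j ≤ S.sNum (φ + ψ) (j / 2 + j / 2) :=
                  S.antitone _ (by omega)
              _ ≤ S.sNum φ (j / 2) + S.sNum ψ (j / 2) := S.add_le φ ψ _ _
        _ = (∑ j ∈ Finset.range (i + 1), S.sNum φ (j / 2)) +
            ∑ j ∈ Finset.range (i + 1), S.sNum ψ (j / 2) := Finset.sum_add_distrib
        _ ≤ (∑ j ∈ Finset.range (2 * (i + 1)), S.sNum φ (j / 2)) +
            ∑ j ∈ Finset.range (2 * (i + 1)), S.sNum ψ (j / 2) := by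
            exact add_le_add
              (Finset.sum_le_sum_of_subset_of_nonneg
                (Finset.range_subset_range.mpr (by omega)) (fun j _ _ => S.nonneg _ _))
              (Finset.sum_le_sum_of_subset_of_nonneg
                (Finset.range_subset_range.mpr (by omega)) (fun j _ _ => S.nonneg _ _))
        _ = 2 * (∑ j ∈ Finset.range (i + 1), S.sNum φ j) +
            2 * (∑ j ∈ Finset.range (i + 1), S.sNum ψ j) := by
            rw [sum_half_aux, sum_half_aux]
    have h1 := hT_le X Y φ hφ i
    have h2 := hT_le X Y ψ hψ i
    have hai := (ha_pos i).le
    have hri := (hr_pos i).le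
    calc a i * (∑ j ∈ Finset.range (i + 1), S.sNum (φ + ψ) j) * r i
        ≤ a i * (2 * (∑ j ∈ Finset.range (i + 1), S.sNum φ j) +
            2 * (∑ j ∈ Finset.range (i + 1), S.sNum ψ j)) * r i := by
          apply mul_le_mul_of_nonneg_right (mul_le_mul_of_nonneg_left key hai) hri
      _ = 2 * (a i * (∑ j ∈ Finset.range (i + 1), S.sNum φ j) * r i) +
            2 * (a i * (∑ j ∈ Finset.range (i + 1), S.sNum ψ j) * r i) := by ring
      _ ≤ 2 * QNorm S a r φ + 2 * QNorm S a r ψ := by gcongr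
      _ = 2 * (QNorm S a r φ + QNorm S a r ψ) := by ring
  · -- composition
    intro X₀ X Y Y₀ _ _ _ _ _ _ _ _ _ _ _ _ η φ ζ hφ
    apply ciSup_le
    intro i
    have hai := (ha_pos i).le
    have hri := (hr_pos i).le
    have key : ∑ j ∈ Finset.range (i + 1), S.sNum ((ζ.comp φ).comp η) j ≤
        ‖ζ‖ * ‖η‖ * ∑ j ∈ Finset.range (i + 1), S.sNum φ j := by
      rw [Finset.mul_sum]
      apply Finset.sum_le_sum
      intro j _
      calc S.sNum ((ζ.comp φ).comp η) j ≤ ‖ζ‖ * S.sNum φ j * ‖η‖ := S.comp_le ζ φ η j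
        _ = ‖ζ‖ * ‖η‖ * S.sNum φ j := by ring
    calc a i * (∑ j ∈ Finset.range (i + 1), S.sNum ((ζ.comp φ).comp η) j) * r i
        ≤ a i * (‖ζ‖ * ‖η‖ * ∑ j ∈ Finset.range (i + 1), S.sNum φ j) * r i :=
          mul_le_mul_of_nonneg_right (mul_le_mul_of_nonneg_left key hai) hri
      _ = (‖ζ‖ * ‖η‖) * (a i * (∑ j ∈ Finset.range (i + 1), S.sNum φ j) * r i) := by ring
      _ ≤ (‖ζ‖ * ‖η‖) * QNorm S a r φ := by
          apply mul_le_mul_of_nonneg_left (hT_le X Y φ hφ i)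
          positivity
      _ = ‖ζ‖ * QNorm S a r φ * ‖η‖ := by ring
  · -- norm bound
    intro X Y _ _ _ _ _ _ φ hφ
    have hterm : ∀ i, (a i * r i) * ‖φ‖ ≤ QNorm S a r φ := by
      intro i
      refine le_trans ?_ (hT_le X Y φ hφ i)
      have hs0 : ‖φ‖ ≤ ∑ j ∈ Finset.range (i + 1), S.sNum φ j := by
        rw [← S.first_eq_norm φ]
        exact Finset.single_le_sum (fun j _ => S.nonneg φ j)
          (Finset.mem_range.mpr (Nat.succ_pos i))
      calc (a i * r i) * ‖φ‖ = a i * ‖φ‖ * r i := by ring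
        _ ≤ a i * (∑ j ∈ Finset.range (i + 1), S.sNum φ j) * r i := by
            apply mul_le_mul_of_nonneg_right
              (mul_le_mul_of_nonneg_left hs0 (ha_pos i).le) (hr_pos i).le
    calc ‖φ‖ = (⨆ i, a i * r i) * ‖φ‖ := by rw [har, one_mul]
      _ = ⨆ i, (a i * r i) * ‖φ‖ := Real.iSup_mul_of_nonneg (norm_nonneg φ) _
      _ ≤ QNorm S a r φ := ciSup_le hterm

end
end

section
/- Let a = (a_n) be a positive sequence and r = (r_n) a bounded, strictly positive weight sequence with sup_i a_i r_i = 1. Let s be an s-number assignment, i.e. for all bounded operators φ between complex Banach spaces it attaches a nonincreasing sequence of nonnegative reals (s_n(φ)) satisfying s_1(φ) = ‖φ‖, s_{m+n−1}(φ+ψ) ≤ s_m(φ) + s_n(ψ), s_n(ζφη) ≤ ‖ζ‖ s_n(φ) ‖η‖, and s_n(φ) = 0 whenever rank(φ) < n. For an s-type operator φ define Q^{(s)}(φ) = sup_i (a_i ∑_{j=1}^i s_j(φ)) r_i. Let X, Y be complex Banach spaces and let (φ_n) be a sequence of s-type χ_{c_0(r)} operators from X to Y that is Cauchy with respect to Q^{(s)}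 (for every ε > 0 there is k with Q^{(s)}(φ_n − φ_m) < ε for all n, m ≥ k). Then there exists an s-type χ_{c_0(r)} operator φ : X → Y with Q^{(s)}(φ − φ_m) → 0 as m → ∞; that is, the class of s-type χ_{c_0(r)} operators from X to Y is complete under the quasi-norm Q^{(s)}. -/
open Filter Topology Finset

noncomputable section

universe u

section Aux

variable {X Y : Type u} [NormedAddCommGroup X] [NormedSpace ℂ X] [CompleteSpace X]
  [NormedAddCommGroup Y] [NormedSpace ℂ Y] [CompleteSpace Y]

/-- Each s-number is 1-Lipschitz: `sⱼ(φ) ≤ sⱼ(ψ) + ‖φ - ψ‖`. -/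
lemma sNum_le_add_norm (S : SNumberAssignment.{u}) (φ ψ : X →L[ℂ] Y) (j : ℕ) :
    S.sNum φ j ≤ S.sNum ψ j + ‖φ - ψ‖ := by
  have h := S.add_le ψ (φ - ψ) j 0
  rw [add_sub_cancel, S.first_eq_norm] at h
  simpa using h

lemma sNum_neg_le (S : SNumberAssignment.{u}) (φ : X →L[ℂ] Y) (j : ℕ) :
    S.sNum (-φ) j ≤ S.sNum φ j := by
  have h := S.comp_le (-(ContinuousLinearMap.id ℂ Y)) φ (ContinuousLinearMap.id ℂ X) j
  have he : ((-(ContinuousLinearMap.id ℂ Y)).comp φ).comp (ContinuousLinearMap.id ℂ X) = -φ := by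
    ext x; simp
  rw [he] at h
  have h1 : ‖-(ContinuousLinearMap.id ℂ Y)‖ ≤ 1 := by
    rw [norm_neg]; exact ContinuousLinearMap.norm_id_le
  have h2 : ‖ContinuousLinearMap.id ℂ X‖ ≤ 1 := ContinuousLinearMap.norm_id_le
  calc S.sNum (-φ) j ≤ ‖-(ContinuousLinearMap.id ℂ Y)‖ * S.sNum φ j * ‖ContinuousLinearMap.id ℂ X‖ := h
    _ ≤ 1 * S.sNum φ j * 1 := by
        have := S.nonneg φ j
        apply mul_le_mul (mul_le_mul h1 le_rfl this (by linarith)) h2 (norm_nonneg _)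
        positivity
    _ = S.sNum φ j := by ring

lemma sum_halves (f : ℕ → ℝ) (n : ℕ) :
    ∑ j ∈ Finset.range (2 * n), f (j / 2) = 2 * ∑ k ∈ Finset.range n, f k := by
  induction n with
  | zero => simp
  | succ n ih =>
    have h2 : 2 * (n + 1) = (2 * n + 1) + 1 := by omega
    rw [h2, Finset.sum_range_succ, Finset.sum_range_succ, ih, Finset.sum_range_succ]
    have e1 : (2 * n) / 2 = n := by omega
    have e2 : (2 * n + 1) / 2 = n := by omega
    rw [e1, e2]; ring

/-- Doubling estimate: `∑_{j≤i} sⱼ(φ+ψ) ≤ 2∑_{j≤i} sⱼ(φ) + 2∑_{j≤i} sⱼ(ψ)`. -/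
lemma sum_sNum_add_le (S : SNumberAssignment.{u}) (φ ψ : X →L[ℂ] Y) (i : ℕ) :
    ∑ j ∈ Finset.range (i + 1), S.sNum (φ + ψ) j ≤
      2 * ∑ j ∈ Finset.range (i + 1), S.sNum φ j +
      2 * ∑ j ∈ Finset.range (i + 1), S.sNum ψ j := by
  have step : ∀ j, S.sNum (φ + ψ) j ≤ S.sNum φ (j / 2) + S.sNum ψ (j / 2) := by
    intro j
    have h := S.add_le φ ψ (j / 2) (j - j / 2)
    have hj : j / 2 + (j - j / 2) = j := by omega
    rw [hj] at h
    have hmono : S.sNum ψ (j - j / 2) ≤ S.sNum ψ (j / 2) :=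
      S.antitone ψ (by omega)
    linarith
  calc ∑ j ∈ Finset.range (i + 1), S.sNum (φ + ψ) j
      ≤ ∑ j ∈ Finset.range (i + 1), (S.sNum φ (j / 2) + S.sNum ψ (j / 2)) :=
        Finset.sum_le_sum fun j _ => step j
    _ = ∑ j ∈ Finset.range (i + 1), S.sNum φ (j / 2)
        + ∑ j ∈ Finset.range (i + 1), S.sNum ψ (j / 2) := Finset.sum_add_distrib
    _ ≤ ∑ j ∈ Finset.range (2 * (i + 1)), S.sNum φ (j / 2)
        + ∑ j ∈ Finset.range (2 * (i + 1)), S.sNum ψ (j / 2) := by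
        exact add_le_add
          (Finset.sum_le_sum_of_subset_of_nonneg
            (Finset.range_subset_range.mpr (by omega)) (fun j _ _ => S.nonneg _ _))
          (Finset.sum_le_sum_of_subset_of_nonneg
            (Finset.range_subset_range.mpr (by omega)) (fun j _ _ => S.nonneg _ _))
    _ = 2 * ∑ j ∈ Finset.range (i + 1), S.sNum φ j
        + 2 * ∑ j ∈ Finset.range (i + 1), S.sNum ψ j := by
        rw [sum_halves, sum_halves]

end Aux

/-- **Statement 19.** If `sup_i aᵢ rᵢ = 1`, then the class of s-type `χ_{c₀(r)}`
operators from `X` to `Y` is complete under the quasi-norm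
`Q^{(s)}(φ) = sup_i aᵢ (∑_{j=1}^i sⱼ(φ)) rᵢ`: every `Q^{(s)}`-Cauchy sequence of
s-type operators converges in `Q^{(s)}` to an s-type operator. -/
theorem sType_complete (S : SNumberAssignment.{u}) (a r : ℕ → ℝ)
    (ha_pos : ∀ n, 0 < a n) (hr_pos : ∀ n, 0 < r n) (hr_bdd : ∃ C, ∀ n, r n ≤ C)
    (har : (⨆ i : ℕ, a i * r i) = 1)
    (X Y : Type u) [NormedAddCommGroup X] [NormedSpace ℂ X] [CompleteSpace X]
    [NormedAddCommGroup Y] [NormedSpace ℂ Y] [CompleteSpace Y]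
    (φs : ℕ → X →L[ℂ] Y) (hφs : ∀ n, IsSType S a r (φs n))
    (hcauchy : ∀ ε > (0 : ℝ), ∃ k, ∀ n m, k ≤ n → k ≤ m → QNorm S a r (φs n - φs m) < ε) :
    ∃ φ : X →L[ℂ] Y, IsSType S a r φ ∧
      Filter.Tendsto (fun m => QNorm S a r (φ - φs m)) Filter.atTop (nhds 0) := by
  classical
  set T : (X →L[ℂ] Y) → ℕ → ℝ :=
    fun ψ i => a i * (∑ j ∈ Finset.range (i + 1), S.sNum ψ j) * r i with hT
  have hT_nonneg : ∀ ψ i, 0 ≤ T ψ i := by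
    intro ψ i
    have : 0 ≤ ∑ j ∈ Finset.range (i + 1), S.sNum ψ j :=
      Finset.sum_nonneg fun j _ => S.nonneg ψ j
    have := mul_nonneg (mul_nonneg (ha_pos i).le this) (hr_pos i).le
    exact this
  have hQ_eq : ∀ ψ : X →L[ℂ] Y, QNorm S a r ψ = ⨆ i, T ψ i := fun _ => rfl
  have hSType_eq : ∀ ψ : X →L[ℂ] Y,
      IsSType S a r ψ ↔ Filter.Tendsto (T ψ) Filter.atTop (nhds 0) := fun _ => Iff.rfl
  -- `aᵢ rᵢ ≤ 1` and some `a_{i₀} r_{i₀} > 1/2`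
  have hbdd_ar : BddAbove (Set.range fun i => a i * r i) := by
    by_contra h
    rw [Real.iSup_of_not_bddAbove h] at har
    norm_num at har
  obtain ⟨i0, hi0⟩ : ∃ i, (1 / 2 : ℝ) < a i * r i := by
    apply exists_lt_of_lt_ciSup
    rw [har]; norm_num
  -- doubling estimates on `T`
  have hTadd : ∀ (ψ χ : X →L[ℂ] Y) i, T (ψ + χ) i ≤ 2 * T ψ i + 2 * T χ i := by
    intro ψ χ i
    have h := sum_sNum_add_le S ψ χ i
    have har0 : (0:ℝ) ≤ a i := (ha_pos i).le
    have hr0 : (0:ℝ) ≤ r i := (hr_pos i).le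
    calc T (ψ + χ) i = a i * (∑ j ∈ Finset.range (i + 1), S.sNum (ψ + χ) j) * r i := rfl
      _ ≤ a i * (2 * ∑ j ∈ Finset.range (i + 1), S.sNum ψ j
            + 2 * ∑ j ∈ Finset.range (i + 1), S.sNum χ j) * r i := by
          apply mul_le_mul_of_nonneg_right _ hr0
          exact mul_le_mul_of_nonneg_left h har0
      _ = 2 * T ψ i + 2 * T χ i := by simp only [hT]; ring
  have hTsub : ∀ (ψ χ : X →L[ℂ] Y) i, T (ψ - χ) i ≤ 2 * T ψ i + 2 * T χ i := by
    intro ψ χ i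
    have h1 : T (ψ - χ) i ≤ 2 * T ψ i + 2 * T (-χ) i := by
      have := hTadd ψ (-χ) i
      rwa [← sub_eq_add_neg] at this
    have h2 : T (-χ) i ≤ T χ i := by
      have hsum : ∑ j ∈ Finset.range (i + 1), S.sNum (-χ) j ≤
          ∑ j ∈ Finset.range (i + 1), S.sNum χ j :=
        Finset.sum_le_sum fun j _ => sNum_neg_le S χ j
      exact mul_le_mul_of_nonneg_right
        (mul_le_mul_of_nonneg_left hsum (ha_pos i).le) (hr_pos i).le
    linarith
  -- the family `T (φs n - φs m)` is bounded above
  have hbddT : ∀ n m, BddAbove (Set.range (T (φs n - φs m))) := by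
    intro n m
    obtain ⟨Bn, hBn⟩ := ((hSType_eq (φs n)).mp (hφs n)).bddAbove_range
    obtain ⟨Bm, hBm⟩ := ((hSType_eq (φs m)).mp (hφs m)).bddAbove_range
    refine ⟨2 * Bn + 2 * Bm, ?_⟩
    rintro x ⟨i, rfl⟩
    have h1 : T (φs n) i ≤ Bn := hBn ⟨i, rfl⟩
    have h2 : T (φs m) i ≤ Bm := hBm ⟨i, rfl⟩
    have := hTsub (φs n) (φs m) i
    linarith
  -- `‖ψ‖ ≤ 2 Q(ψ)` when terms are bounded
  have hnorm_le : ∀ (ψ : X →L[ℂ] Y), BddAbove (Set.range (T ψ)) →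
      ‖ψ‖ ≤ 2 * QNorm S a r ψ := by
    intro ψ hb
    have h1 : T ψ i0 ≤ QNorm S a r ψ := by rw [hQ_eq]; exact le_ciSup hb i0
    have hsum : ‖ψ‖ ≤ ∑ j ∈ Finset.range (i0 + 1), S.sNum ψ j := by
      have := Finset.single_le_sum (f := fun j => S.sNum ψ j)
        (fun j _ => S.nonneg ψ j) (Finset.mem_range.mpr (Nat.succ_pos i0))
      rw [← S.first_eq_norm ψ]
      simpa using this
    have h2 : a i0 * ‖ψ‖ * r i0 ≤ T ψ i0 :=
      mul_le_mul_of_nonneg_right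
        (mul_le_mul_of_nonneg_left hsum (ha_pos i0).le) (hr_pos i0).le
    nlinarith [norm_nonneg ψ, hi0, h1, h2]
  -- `φs` is Cauchy in operator norm
  have hcs : CauchySeq φs := by
    rw [Metric.cauchySeq_iff]
    intro ε hε
    obtain ⟨k, hk⟩ := hcauchy (ε / 4) (by positivity)
    refine ⟨k, fun n hn m hm => ?_⟩
    have h1 := hnorm_le (φs n - φs m) (hbddT n m)
    have h2 := hk n m hn hm
    rw [dist_eq_norm]
    linarith
  obtain ⟨φ, hφlim⟩ := cauchySeq_tendsto_of_complete hcs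
  -- termwise limits
  have hnormlim : Filter.Tendsto (fun n => ‖φs n - φ‖) Filter.atTop (nhds 0) :=
    tendsto_iff_norm_sub_tendsto_zero.mp hφlim
  have hterm_tendsto : ∀ m i,
      Filter.Tendsto (fun n => T (φs n - φs m) i) Filter.atTop (nhds (T (φ - φs m) i)) := by
    intro m i
    have hsumlim : Filter.Tendsto
        (fun n => ∑ j ∈ Finset.range (i + 1), S.sNum (φs n - φs m) j)
        Filter.atTop (nhds (∑ j ∈ Finset.range (i + 1), S.sNum (φ - φs m) j)) := by
      apply tendsto_finset_sum
      intro j _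
      rw [tendsto_iff_dist_tendsto_zero]
      apply squeeze_zero (fun n => dist_nonneg) _ hnormlim
      intro n
      rw [Real.dist_eq, abs_sub_le_iff]
      constructor
      · have := sNum_le_add_norm S (φs n - φs m) (φ - φs m) j
        have he : (φs n - φs m) - (φ - φs m) = φs n - φ := by abel
        rw [he] at this; linarith
      · have := sNum_le_add_norm S (φ - φs m) (φs n - φs m) j
        have he : (φ - φs m) - (φs n - φs m) = -(φs n - φ) := by abel
        rw [he, norm_neg] at this; linarith
    exact (tendsto_const_nhds.mul hsumlim).mul tendsto_const_nhds
  -- key estimate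
  have hkey : ∀ ε > (0:ℝ), ∃ k, ∀ m, k ≤ m → ∀ i, T (φ - φs m) i ≤ ε := by
    intro ε hε
    obtain ⟨k, hk⟩ := hcauchy ε hε
    refine ⟨k, fun m hm i => ?_⟩
    refine le_of_tendsto (hterm_tendsto m i) ?_
    filter_upwards [Filter.eventually_ge_atTop k] with n hn
    have h1 : T (φs n - φs m) i ≤ QNorm S a r (φs n - φs m) := by
      rw [hQ_eq]; exact le_ciSup (hbddT n m) i
    exact h1.trans (hk n m hn hm).le
  have hQ_bound : ∀ ε > (0:ℝ), ∃ k, ∀ m, k ≤ m →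
      0 ≤ QNorm S a r (φ - φs m) ∧ QNorm S a r (φ - φs m) ≤ ε := by
    intro ε hε
    obtain ⟨k, hk⟩ := hkey ε hε
    refine ⟨k, fun m hm => ?_⟩
    have hb : BddAbove (Set.range (T (φ - φs m))) := by
      refine ⟨ε, ?_⟩; rintro x ⟨i, rfl⟩; exact hk m hm i
    constructor
    · rw [hQ_eq]
      exact (hT_nonneg (φ - φs m) 0).trans (le_ciSup hb 0)
    · rw [hQ_eq]
      exact ciSup_le (hk m hm)
  have hQtendsto : Filter.Tendsto (fun m => QNorm S a r (φ - φs m)) Filter.atTop (nhds 0) := by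
    rw [Metric.tendsto_atTop]
    intro ε hε
    obtain ⟨k, hk⟩ := hQ_bound (ε / 2) (by positivity)
    refine ⟨k, fun m hm => ?_⟩
    obtain ⟨h1, h2⟩ := hk m hm
    rw [Real.dist_eq, sub_zero, abs_of_nonneg h1]
    linarith
  refine ⟨φ, ?_, hQtendsto⟩
  rw [hSType_eq]
  rw [Metric.tendsto_atTop]
  intro ε hε
  obtain ⟨k, hk⟩ := hkey (ε / 8) (by positivity)
  have hk' : Filter.Tendsto (T (φs k)) Filter.atTop (nhds 0) := (hSType_eq (φs k)).mp (hφs k)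
  rw [Metric.tendsto_atTop] at hk'
  obtain ⟨N, hN⟩ := hk' (ε / 8) (by positivity)
  refine ⟨N, fun i hi => ?_⟩
  have h1 : T φ i ≤ 2 * T (φs k) i + 2 * T (φ - φs k) i := by
    have := hTadd (φs k) (φ - φs k) i
    rwa [add_sub_cancel] at this
  have h2 : T (φ - φs k) i ≤ ε / 8 := hk k le_rfl i
  have h3 : T (φs k) i < ε / 8 := by
    have := hN i hi
    rwa [Real.dist_eq, sub_zero, abs_of_nonneg (hT_nonneg _ _)] at this
  rw [Real.dist_eq, sub_zero, abs_of_nonneg (hT_nonneg _ _)]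
  linarith

end
end
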